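/- arXiv:1510.02145 — 2 statements merged into one kernel-verified Lean document; each statement's English description precedes it below -/
import Mathlib

section
/- Let F : ℝⁿ × ℝᵐ → ℝ be continuously differentiable with nonempty saddle set Saddle(F). Assume (i) F is globally convex-concave and F(x,·) is linear (affine) in z for each fixed x, and (ii) for each (x*,z*) ∈ Saddle(F), whenever F(x,z*) = F(x*,z*) for some x ∈ ℝⁿ, the point (x,z*) belongs to Saddle(F). Then Saddle(F) is globally asymptotically stable under the saddle-point dynamics ẋ = -∇ₓF(x,z), ż = ∇_zF(x,z), and every trajectory converges to a single point of Saddle(F). -/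
/-!
For a saddle point `q`, convexity in `x` and linearity in `z` give, along every trajectory,
`d/dt ‖(x, z) - q‖² ≤ -2 (F (x, q.2) - F q) ≤ 0`. Hence saddle points are stable and trajectories
are bounded, so uniformly continuous, and Barbalat's lemma forces `F (x(t), q.2) → F q`. For every
cluster point `p` of a trajectory, `(p.1, q.2)` is therefore a saddle point by hypothesis (ii).
The distances to these saddle points converge, which forces all cluster points to have the same
`x`-coordinate, so `x(t)` converges; Barbalat's lemma applied to `⟪∇ₓF p, x(t)⟫` then gives
`∇ₓF p = 0`. Since `∇_zF` does not depend on `z`, also `∇_zF p = ∇_zF (p.1, q.2) = 0`, so `p` is a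
saddle point, and the nonincreasing distance to `p` tends to its value `0` at the cluster point.
-/

open Metric Filter Topology Set

noncomputable section

/-- Euclidean space `ℝⁿ`. -/
abbrev En (n : ℕ) : Type := EuclideanSpace ℝ (Fin n)

variable {n m : ℕ}

/-- Partial gradient of `F` in the first (x) variable. -/
def gradX (F : En n × En m → ℝ) (p : En n × En m) : En n :=
  gradient (fun x => F (x, p.2)) p.1

/-- Partial gradient of `F` in the second (z) variable. -/
def gradZ (F : En n × En m → ℝ) (p : En n × En m) : En m :=
  gradient (fun z => F (p.1, z)) p.2

/-- The saddle-point vector field `X_sp = (-∇ₓF, ∇_zF)`. -/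
def Xsp (F : En n × En m → ℝ) (p : En n × En m) : En n × En m :=
  (-gradX F p, gradZ F p)

/-- A trajectory of the saddle-point dynamics, defined on `[0,∞)`. -/
def IsTrajectory (F : En n × En m → ℝ) (φ : ℝ → En n × En m) : Prop :=
  ∀ t : ℝ, 0 ≤ t → HasDerivAt φ (Xsp F (φ t)) t

/-- `p` is a (local min-max) saddle point of `F`. -/
def IsSaddlePoint (F : En n × En m → ℝ) (p : En n × En m) : Prop :=
  ∃ U : Set (En n), ∃ W : Set (En m),
    IsOpen U ∧ IsOpen W ∧ p.1 ∈ U ∧ p.2 ∈ W ∧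
    ∀ x ∈ U, ∀ z ∈ W, F (p.1, z) ≤ F p ∧ F p ≤ F (x, p.2)

/-- The set of saddle points of `F`. -/
def SaddleSet (F : En n × En m → ℝ) : Set (En n × En m) :=
  {p | IsSaddlePoint F p}

/-- A point `p` is stable for the saddle-point dynamics of `F`. -/
def StablePt (F : En n × En m → ℝ) (p : En n × En m) : Prop :=
  ∀ ε > 0, ∃ δ > 0, ∀ φ : ℝ → En n × En m, IsTrajectory F φ →
    dist (φ 0) p < δ → ∀ t : ℝ, 0 ≤ t → dist (φ t) p < ε

/-- `S` is an isolated path connected component of `T`. -/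
def IsIsolatedPathComponent (S T : Set (En n × En m)) : Prop :=
  S ⊆ T ∧ (∀ a ∈ S, ∀ b ∈ S, JoinedIn S a b) ∧
    ∃ U : Set (En n × En m), IsOpen U ∧ S ⊆ U ∧ U ∩ T = S

/-- `F` is locally convex-concave at `p`. -/
def LocallyConvexConcaveAt (F : En n × En m → ℝ) (p : En n × En m) : Prop :=
  ∃ U : Set (En n × En m), IsOpen U ∧ p ∈ U ∧
    ∀ q ∈ U, ConvexOn ℝ {x : En n | (x, q.2) ∈ U} (fun x => F (x, q.2)) ∧
      ConcaveOn ℝ {z : En m | (q.1, z) ∈ U} (fun z => F (q.1, z))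

/-- `F` is locally strictly convex-concave at `p`. -/
def LocallyStrictlyConvexConcaveAt (F : En n × En m → ℝ) (p : En n × En m) : Prop :=
  LocallyConvexConcaveAt F p ∧
    ((∃ r > 0, StrictConvexOn ℝ (ball p.1 r) (fun x => F (x, p.2))) ∨
      (∃ r > 0, StrictConcaveOn ℝ (ball p.2 r) (fun z => F (p.1, z))))

theorem uniformContinuousOn_comp_of_hasDerivAt_of_mapsTo {E X : Type*} [NormedAddCommGroup E]
    [NormedSpace ℝ E] [UniformSpace X] {v : E → E} (hv : Continuous v) {φ : ℝ → E}
    (hφ : ∀ t, 0 ≤ t → HasDerivAt φ (v (φ t)) t) {K : Set E} (hK : IsCompact K)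
    (hφK : MapsTo φ (Ici 0) K) {g : E → X} (hg : Continuous g) :
    UniformContinuousOn (g ∘ φ) (Ici 0) := by
  obtain ⟨C, hC⟩ := hK.exists_bound_of_continuousOn hv.continuousOn
  have hlip : LipschitzOnWith C.toNNReal φ (Ici 0) :=
    (convex_Ici 0).lipschitzOnWith_of_nnnorm_hasDerivWithin_le
      (fun t ht => (hφ t ht).hasDerivWithinAt) fun t ht => by
        rw [← NNReal.coe_le_coe, coe_nnnorm]
        exact (hC _ (hφK ht)).trans (le_max_left _ _)
  exact (hK.uniformContinuousOn_of_continuous hg.continuousOn).comp hlip.uniformContinuousOn hφK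

/-- A one-sided form of Barbalat's lemma. -/
theorem eventually_lt_of_tendsto_of_hasDerivAt_le_neg {f h : ℝ → ℝ} {L : ℝ}
    (hf : Tendsto f atTop (𝓝 L)) (hderiv : ∀ t, 0 ≤ t → ∃ d, HasDerivAt f d t ∧ d ≤ -h t)
    (hh : UniformContinuousOn h (Ici 0)) {ε : ℝ} (hε : 0 < ε) : ∀ᶠ t in atTop, h t < ε := by
  obtain ⟨δ, hδ, hδh⟩ := Metric.uniformContinuousOn_iff.1 hh (ε / 2) (half_pos hε)
  obtain ⟨τ, hτ, hτδ⟩ : ∃ τ, 0 < τ ∧ τ < δ := ⟨δ / 2, half_pos hδ, half_lt_self hδ⟩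
  have hf' : ∀ s, 0 ≤ s → DifferentiableAt ℝ f s ∧ deriv f s ≤ -h s := fun s hs =>
    let ⟨_, hd, hdh⟩ := hderiv s hs
    ⟨hd.differentiableAt, hd.deriv ▸ hdh⟩
  have hdrop : ∀ t, 0 ≤ t → (h t - ε / 2) * τ ≤ f t - f (t + τ) := by
    intro t ht
    have hbound : ∀ s ∈ interior (Icc t (t + τ)), deriv f s ≤ -(h t - ε / 2) := by
      intro s hs
      rw [interior_Icc] at hs
      have hclose := hδh s (ht.trans hs.1.le) t ht
        (by rw [Real.dist_eq, abs_of_pos (sub_pos.2 hs.1)]; linarith [hs.2])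
      rw [Real.dist_eq] at hclose
      linarith [(abs_lt.1 hclose).1, (hf' s (ht.trans hs.1.le)).2]
    have hmvt := (convex_Icc t (t + τ)).image_sub_le_mul_sub_of_deriv_le
      (fun s hs => (hf' s (ht.trans hs.1)).1.continuousAt.continuousWithinAt)
      (fun s hs => (hf' s (ht.trans (interior_subset hs).1)).1.differentiableWithinAt)
      hbound t (left_mem_Icc.2 (by linarith)) (t + τ) (right_mem_Icc.2 (by linarith))
      (by linarith)
    linarith
  have hincr : Tendsto (fun t => f t - f (t + τ)) atTop (𝓝 0) := by
    simpa using hf.sub (hf.comp (tendsto_atTop_add_const_right _ τ tendsto_id))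
  filter_upwards [hincr.eventually (gt_mem_nhds (mul_pos (half_pos hε) hτ)),
    eventually_ge_atTop 0] with t hsmall ht
  nlinarith [hdrop t ht]

theorem MapClusterPt.le_of_eventually_le {α X : Type*} [TopologicalSpace X] {l : Filter α}
    {φ : α → X} {p : X} (hp : MapClusterPt p l φ) {h : X → ℝ} (hh : Continuous h) {c : ℝ}
    (hev : ∀ᶠ t in l, h (φ t) ≤ c) : h p ≤ c :=
  closure_minimal (fun _ hw => hw) (isClosed_le hh continuous_const)
    (hp.clusterPt.mem_closure_of_mem _ hev)

theorem MapClusterPt.eq_of_tendsto {α X Y : Type*} [TopologicalSpace X] [TopologicalSpace Y]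
    [T2Space Y] {l : Filter α} {φ : α → X} {p : X} (hp : MapClusterPt p l φ) {h : X → Y}
    (hh : ContinuousAt h p) {y : Y} (hy : Tendsto (h ∘ φ) l (𝓝 y)) : h p = y := by
  by_contra hne
  have hcluster : ClusterPt (h p) (𝓝 y) := (hp.tendsto_comp hh).clusterPt.mono hy
  exact hcluster.neBot.ne (disjoint_iff.1 (disjoint_nhds_nhds.2 hne))

theorem AntitoneOn.exists_tendsto_atTop {f : ℝ → ℝ} {a c : ℝ} (hf : AntitoneOn f (Ici a))
    (hc : ∀ t, a ≤ t → c ≤ f t) : ∃ r, Tendsto f atTop (𝓝 r) := by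
  have hanti : Antitone fun t => f (max t a) := fun s t hst =>
    hf (mem_Ici.2 (le_max_right s a)) (mem_Ici.2 (le_max_right t a)) (max_le_max hst le_rfl)
  refine ⟨_, (tendsto_atTop_ciInf hanti ⟨c, ?_⟩).congr' ?_⟩
  · rintro _ ⟨t, rfl⟩
    exact hc _ (le_max_right _ _)
  · filter_upwards [eventually_ge_atTop a] with t ht
    rw [max_eq_left ht]

theorem ConvexOn.add_inner_sub_le {E : Type*} [NormedAddCommGroup E] [InnerProductSpace ℝ E]
    [CompleteSpace E] {f : E → ℝ} (hf : ConvexOn ℝ univ f) {g x : E} (hg : HasGradientAt f g x)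
    (y : E) : f x + inner ℝ g (y - x) ≤ f y := by
  let ℓ : ℝ →ᵃ[ℝ] E := AffineMap.lineMap x y
  have hline : ConvexOn ℝ univ (f ∘ ℓ) := hf.comp_affineMap ℓ
  have hderiv : HasDerivAt (f ∘ ℓ) (inner ℝ g (y - x)) 0 := by
    have hℓ : HasDerivAt ℓ (y - x) 0 := AffineMap.hasDerivAt_lineMap
    simpa [ℓ, InnerProductSpace.toDual_apply_apply] using
      (hg.hasFDerivAt.comp_hasDerivAt_of_eq (0 : ℝ) hℓ (by simp [ℓ]))
  have := hline.le_slope_of_hasDerivAt (mem_univ 0) (mem_univ 1) one_pos hderiv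
  simp [ℓ, slope_def_field] at this
  linarith

section PartialGradients

variable {F : En n × En m → ℝ}

theorem hasGradientAt_gradX (hF : Differentiable ℝ F) (p : En n × En m) :
    HasGradientAt (fun x => F (x, p.2)) (gradX F p) p.1 :=
  ((hF _).comp p.1 (differentiableAt_id.prodMk (differentiableAt_const _))).hasGradientAt

theorem hasGradientAt_gradZ (hF : Differentiable ℝ F) (p : En n × En m) :
    HasGradientAt (fun z => F (p.1, z)) (gradZ F p) p.2 :=
  ((hF _).comp p.2 ((differentiableAt_const _).prodMk differentiableAt_id)).hasGradientAt

theorem gradX_eq_toDual_symm (hF : Differentiable ℝ F) (p : En n × En m) :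
    gradX F p = (InnerProductSpace.toDual ℝ (En n)).symm
      ((fderiv ℝ F p).comp (ContinuousLinearMap.inl ℝ (En n) (En m))) :=
  ((hF p).hasFDerivAt.comp p.1 (hasFDerivAt_prodMk_left p.1 p.2)).hasGradientAt.gradient

theorem gradZ_eq_toDual_symm (hF : Differentiable ℝ F) (p : En n × En m) :
    gradZ F p = (InnerProductSpace.toDual ℝ (En m)).symm
      ((fderiv ℝ F p).comp (ContinuousLinearMap.inr ℝ (En n) (En m))) :=
  ((hF p).hasFDerivAt.comp p.2 (hasFDerivAt_prodMk_right p.1 p.2)).hasGradientAt.gradient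

theorem continuous_gradX (hF : ContDiff ℝ 1 F) : Continuous (gradX F) := by
  rw [funext (gradX_eq_toDual_symm (hF.differentiable one_ne_zero))]
  exact (LinearIsometryEquiv.continuous _).comp
    ((hF.continuous_fderiv one_ne_zero).clm_comp continuous_const)

theorem continuous_gradZ (hF : ContDiff ℝ 1 F) : Continuous (gradZ F) := by
  rw [funext (gradZ_eq_toDual_symm (hF.differentiable one_ne_zero))]
  exact (LinearIsometryEquiv.continuous _).comp
    ((hF.continuous_fderiv one_ne_zero).clm_comp continuous_const)

theorem continuous_Xsp (hF : ContDiff ℝ 1 F) : Continuous (Xsp F) :=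
  (continuous_gradX hF).neg.prodMk (continuous_gradZ hF)

theorem gradZ_eq_of_affine {x : En n} {L : En m →L[ℝ] ℝ} {c : ℝ}
    (hL : ∀ z, F (x, z) = L z + c) (z : En m) :
    gradZ F (x, z) = (InnerProductSpace.toDual ℝ (En m)).symm L := by
  have : (fun z => F (x, z)) = fun z => L z + c := funext hL
  simp only [gradZ, this]
  exact (L.hasFDerivAt.add_const c).hasGradientAt.gradient

end PartialGradients

section ConvexConcave

variable {F : En n × En m → ℝ}

theorem apply_eq_add_inner_gradZ
    (hlin : ∀ x : En n, ∃ (L : En m →L[ℝ] ℝ) (c : ℝ), ∀ z : En m, F (x, z) = L z + c)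
    (p : En n × En m) (z : En m) : F (p.1, z) = F p + inner ℝ (gradZ F p) (z - p.2) := by
  obtain ⟨L, c, hL⟩ := hlin p.1
  rw [gradZ_eq_of_affine hL, InnerProductSpace.toDual_symm_apply, hL, map_sub,
    show F p = F (p.1, p.2) from rfl, hL]
  ring

theorem gradZ_mk_eq_gradZ_mk
    (hlin : ∀ x : En n, ∃ (L : En m →L[ℝ] ℝ) (c : ℝ), ∀ z : En m, F (x, z) = L z + c)
    (x : En n) (z z' : En m) : gradZ F (x, z) = gradZ F (x, z') := by
  obtain ⟨L, c, hL⟩ := hlin x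
  rw [gradZ_eq_of_affine hL, gradZ_eq_of_affine hL]

namespace IsSaddlePoint

variable {p : En n × En m}

theorem isLocalMax_snd (hp : IsSaddlePoint F p) : IsLocalMax (fun z => F (p.1, z)) p.2 := by
  obtain ⟨U, W, -, hW, hpU, hpW, hsad⟩ := hp
  filter_upwards [hW.mem_nhds hpW] with z hz using (hsad p.1 hpU z hz).1

theorem isLocalMin_fst (hp : IsSaddlePoint F p) : IsLocalMin (fun x => F (x, p.2)) p.1 := by
  obtain ⟨U, W, hU, -, hpU, hpW, hsad⟩ := hp
  filter_upwards [hU.mem_nhds hpU] with x hx using (hsad x hx p.2 hpW).2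

theorem gradZ_eq_zero (hF : Differentiable ℝ F) (hp : IsSaddlePoint F p) : gradZ F p = 0 := by
  simpa using hp.isLocalMax_snd.hasFDerivAt_eq_zero (hasGradientAt_gradZ hF p).hasFDerivAt

theorem le_apply_mk_snd (hcvx : ConvexOn ℝ univ (fun x => F (x, p.2))) (hp : IsSaddlePoint F p)
    (x : En n) : F p ≤ F (x, p.2) :=
  IsMinOn.of_isLocalMin_of_convex_univ hp.isLocalMin_fst hcvx x

theorem apply_fst_mk_eq (hF : Differentiable ℝ F)
    (hlin : ∀ x : En n, ∃ (L : En m →L[ℝ] ℝ) (c : ℝ), ∀ z : En m, F (x, z) = L z + c)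
    (hp : IsSaddlePoint F p) (z : En m) : F (p.1, z) = F p := by
  simp [apply_eq_add_inner_gradZ hlin p z, hp.gradZ_eq_zero hF]

end IsSaddlePoint

theorem isSaddlePoint_of_gradX_eq_zero_of_gradZ_eq_zero (hF : Differentiable ℝ F)
    (hcvx : ∀ z : En m, ConvexOn ℝ univ (fun x => F (x, z)))
    (hlin : ∀ x : En n, ∃ (L : En m →L[ℝ] ℝ) (c : ℝ), ∀ z : En m, F (x, z) = L z + c)
    {p : En n × En m} (hX : gradX F p = 0) (hZ : gradZ F p = 0) : IsSaddlePoint F p := by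
  refine ⟨univ, univ, isOpen_univ, isOpen_univ, mem_univ _, mem_univ _, fun x _ z _ => ⟨?_, ?_⟩⟩
  · simp [apply_eq_add_inner_gradZ hlin p z, hZ]
  · simpa [hX] using (hcvx p.2).add_inner_sub_le (hasGradientAt_gradX hF p) x

theorem inner_gradX_add_inner_gradZ_le (hF : Differentiable ℝ F)
    (hcvx : ∀ z : En m, ConvexOn ℝ univ (fun x => F (x, z)))
    (hlin : ∀ x : En n, ∃ (L : En m →L[ℝ] ℝ) (c : ℝ), ∀ z : En m, F (x, z) = L z + c)
    {q : En n × En m} (hq : IsSaddlePoint F q) (p : En n × En m) :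
    inner ℝ (p.1 - q.1) (-gradX F p) + inner ℝ (p.2 - q.2) (gradZ F p) ≤ F q - F (p.1, q.2) := by
  have hconvex := (hcvx p.2).add_inner_sub_le (hasGradientAt_gradX hF p) q.1
  have haffine := apply_eq_add_inner_gradZ hlin p q.2
  have hconst := hq.apply_fst_mk_eq hF hlin p.2
  have hinner_x : inner ℝ (p.1 - q.1) (-gradX F p) = inner ℝ (gradX F p) (q.1 - p.1) := by
    rw [inner_neg_right, real_inner_comm, ← inner_neg_right, neg_sub]
  have hinner_z : inner ℝ (p.2 - q.2) (gradZ F p) = -inner ℝ (gradZ F p) (q.2 - p.2) := by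
    rw [real_inner_comm, ← inner_neg_right, neg_sub]
  linarith

end ConvexConcave

/-- The Lyapunov function of the dynamics. It is not `dist p q ^ 2`: the norm on `En n × En m` is
the sup norm. -/
def sqDistL2 (p q : En n × En m) : ℝ := ‖p.1 - q.1‖ ^ 2 + ‖p.2 - q.2‖ ^ 2

theorem sqDistL2_nonneg (p q : En n × En m) : 0 ≤ sqDistL2 p q := by
  unfold sqDistL2; positivity

theorem sqDistL2_self (p : En n × En m) : sqDistL2 p p = 0 := by
  simp [sqDistL2]

theorem continuous_sqDistL2 (q : En n × En m) : Continuous fun p => sqDistL2 p q := by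
  unfold sqDistL2; fun_prop

theorem dist_sq_le_sqDistL2 (p q : En n × En m) : dist p q ^ 2 ≤ sqDistL2 p q := by
  rw [Prod.dist_eq, sqDistL2, ← dist_eq_norm, ← dist_eq_norm]
  rcases max_cases (dist p.1 q.1) (dist p.2 q.2) with ⟨h, -⟩ | ⟨h, -⟩ <;> rw [h] <;>
    nlinarith [sq_nonneg (dist p.1 q.1), sq_nonneg (dist p.2 q.2)]

theorem sqDistL2_le_two_mul_dist_sq (p q : En n × En m) : sqDistL2 p q ≤ 2 * dist p q ^ 2 := by
  rw [Prod.dist_eq, sqDistL2, ← dist_eq_norm, ← dist_eq_norm]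
  have h1 := le_max_left (dist p.1 q.1) (dist p.2 q.2)
  have h2 := le_max_right (dist p.1 q.1) (dist p.2 q.2)
  nlinarith [dist_nonneg (x := p.1) (y := q.1), dist_nonneg (x := p.2) (y := q.2)]

namespace IsTrajectory

variable {F : En n × En m → ℝ} {φ : ℝ → En n × En m}

theorem hasDerivAt_fst (hφ : IsTrajectory F φ) {t : ℝ} (ht : 0 ≤ t) :
    HasDerivAt (fun s => (φ s).1) (-gradX F (φ t)) t :=
  (ContinuousLinearMap.fst ℝ (En n) (En m)).hasFDerivAt.comp_hasDerivAt t (hφ t ht)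

theorem hasDerivAt_snd (hφ : IsTrajectory F φ) {t : ℝ} (ht : 0 ≤ t) :
    HasDerivAt (fun s => (φ s).2) (gradZ F (φ t)) t :=
  (ContinuousLinearMap.snd ℝ (En n) (En m)).hasFDerivAt.comp_hasDerivAt t (hφ t ht)

theorem hasDerivAt_sqDistL2 (hφ : IsTrajectory F φ) (q : En n × En m) {t : ℝ} (ht : 0 ≤ t) :
    HasDerivAt (fun s => sqDistL2 (φ s) q)
      (2 * inner ℝ ((φ t).1 - q.1) (-gradX F (φ t))
        + 2 * inner ℝ ((φ t).2 - q.2) (gradZ F (φ t))) t :=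
  ((hφ.hasDerivAt_fst ht).sub_const q.1).norm_sq.add ((hφ.hasDerivAt_snd ht).sub_const q.2).norm_sq

variable (hcvx : ∀ z : En m, ConvexOn ℝ univ (fun x => F (x, z)))
  (hlin : ∀ x : En n, ∃ (L : En m →L[ℝ] ℝ) (c : ℝ), ∀ z : En m, F (x, z) = L z + c)
  {q : En n × En m}

include hcvx hlin

theorem exists_hasDerivAt_sqDistL2_le (hF : Differentiable ℝ F) (hφ : IsTrajectory F φ)
    (hq : IsSaddlePoint F q) {t : ℝ} (ht : 0 ≤ t) :
    ∃ d, HasDerivAt (fun s => sqDistL2 (φ s) q) d t ∧ d ≤ -(2 * (F ((φ t).1, q.2) - F q)) :=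
  ⟨_, hφ.hasDerivAt_sqDistL2 q ht, by
    linarith [inner_gradX_add_inner_gradZ_le hF hcvx hlin hq (φ t)]⟩

theorem antitoneOn_sqDistL2 (hF : Differentiable ℝ F) (hφ : IsTrajectory F φ)
    (hq : IsSaddlePoint F q) : AntitoneOn (fun t => sqDistL2 (φ t) q) (Ici 0) := by
  have hV := fun t (ht : 0 ≤ t) => exists_hasDerivAt_sqDistL2_le hcvx hlin hF hφ hq ht
  refine antitoneOn_of_deriv_nonpos (convex_Ici 0)
    (fun t ht => (hV t ht).choose_spec.1.continuousAt.continuousWithinAt)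
    (fun t ht => ?_) (fun t ht => ?_) <;> rw [interior_Ici] at ht
  · exact (hV t (le_of_lt ht)).choose_spec.1.differentiableAt.differentiableWithinAt
  · obtain ⟨d, hd, hdle⟩ := hV t (le_of_lt ht)
    rw [hd.deriv]
    linarith [hq.le_apply_mk_snd (hcvx q.2) (φ t).1]

theorem dist_sq_le (hF : Differentiable ℝ F) (hφ : IsTrajectory F φ) (hq : IsSaddlePoint F q)
    {t : ℝ} (ht : 0 ≤ t) : dist (φ t) q ^ 2 ≤ 2 * dist (φ 0) q ^ 2 :=
  calc dist (φ t) q ^ 2 ≤ sqDistL2 (φ t) q := dist_sq_le_sqDistL2 _ _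
    _ ≤ sqDistL2 (φ 0) q :=
      antitoneOn_sqDistL2 hcvx hlin hF hφ hq (mem_Ici.2 le_rfl) (mem_Ici.2 ht) ht
    _ ≤ 2 * dist (φ 0) q ^ 2 := sqDistL2_le_two_mul_dist_sq _ _

theorem mapsTo_closedBall (hF : Differentiable ℝ F) (hφ : IsTrajectory F φ)
    (hq : IsSaddlePoint F q) : MapsTo φ (Ici 0) (closedBall q (2 * dist (φ 0) q)) := by
  intro t ht
  rw [mem_closedBall]
  nlinarith [dist_sq_le hcvx hlin hF hφ hq ht, dist_nonneg (x := φ t) (y := q),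
    dist_nonneg (x := φ 0) (y := q)]

theorem exists_tendsto_sqDistL2 (hF : Differentiable ℝ F) (hφ : IsTrajectory F φ)
    (hq : IsSaddlePoint F q) : ∃ r, Tendsto (fun t => sqDistL2 (φ t) q) atTop (𝓝 r) :=
  (antitoneOn_sqDistL2 hcvx hlin hF hφ hq).exists_tendsto_atTop fun _ _ => sqDistL2_nonneg _ _

theorem exists_mapClusterPt (hF : Differentiable ℝ F) (hφ : IsTrajectory F φ)
    (hq : IsSaddlePoint F q) : ∃ p, MapClusterPt p atTop φ :=
  let ⟨p, _, hp⟩ := (isCompact_closedBall q _).exists_mapClusterPt (tendsto_principal.2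
    ((eventually_ge_atTop 0).mono fun _ ht => hφ.mapsTo_closedBall hcvx hlin hF hq ht))
  ⟨p, hp⟩

theorem tendsto_of_mapClusterPt_of_isSaddlePoint (hF : Differentiable ℝ F)
    (hφ : IsTrajectory F φ) {p : En n × En m} (hp : MapClusterPt p atTop φ)
    (hpsad : IsSaddlePoint F p) : Tendsto φ atTop (𝓝 p) := by
  obtain ⟨r, hr⟩ := hφ.exists_tendsto_sqDistL2 hcvx hlin hF hpsad
  obtain rfl : 0 = r := (sqDistL2_self p).symm.trans
    (hp.eq_of_tendsto (continuous_sqDistL2 p).continuousAt hr)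
  refine tendsto_iff_dist_tendsto_zero.2 (squeeze_zero (fun _ => dist_nonneg)
    (fun t => Real.le_sqrt_of_sq_le (dist_sq_le_sqDistL2 (φ t) p)) ?_)
  simpa using hr.sqrt

variable (hF : ContDiff ℝ 1 F) (hφ : IsTrajectory F φ) (hq : IsSaddlePoint F q)
  (hiso : ∀ p ∈ SaddleSet F, ∀ x : En n, F (x, p.2) = F p → (x, p.2) ∈ SaddleSet F)

include hF hφ hq

theorem uniformContinuousOn_comp {g : En n × En m → ℝ} (hg : Continuous g) :
    UniformContinuousOn (g ∘ φ) (Ici 0) :=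
  uniformContinuousOn_comp_of_hasDerivAt_of_mapsTo (continuous_Xsp hF) hφ
    (isCompact_closedBall _ _) (hφ.mapsTo_closedBall hcvx hlin (hF.differentiable one_ne_zero) hq)
    hg

include hiso

theorem isSaddlePoint_mk_of_mapClusterPt {p : En n × En m} (hp : MapClusterPt p atTop φ) :
    IsSaddlePoint F (p.1, q.2) := by
  have hFd := hF.differentiable one_ne_zero
  obtain ⟨r, hr⟩ := hφ.exists_tendsto_sqDistL2 hcvx hlin hFd hq
  have hgap : Continuous fun w : En n × En m => 2 * (F (w.1, q.2) - F q) := by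
    have := hF.continuous; fun_prop
  have hle : 2 * (F (p.1, q.2) - F q) ≤ 0 := le_of_forall_pos_le_add fun ε hε => by
    simpa using hp.le_of_eventually_le hgap
      ((eventually_lt_of_tendsto_of_hasDerivAt_le_neg hr
        (fun t ht => hφ.exists_hasDerivAt_sqDistL2_le hcvx hlin hFd hq ht)
        (hφ.uniformContinuousOn_comp hcvx hlin hF hq hgap) hε).mono fun _ => le_of_lt)
  exact hiso q hq p.1 (le_antisymm (by linarith) (hq.le_apply_mk_snd (hcvx q.2) p.1))

theorem fst_eq_of_mapClusterPt {p p' : En n × En m} (hp : MapClusterPt p atTop φ)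
    (hp' : MapClusterPt p' atTop φ) : p.1 = p'.1 := by
  have hFd := hF.differentiable one_ne_zero
  obtain ⟨r, hr⟩ := hφ.exists_tendsto_sqDistL2 hcvx hlin hFd
    (hφ.isSaddlePoint_mk_of_mapClusterPt hcvx hlin hF hq hiso hp)
  obtain ⟨r', hr'⟩ := hφ.exists_tendsto_sqDistL2 hcvx hlin hFd
    (hφ.isSaddlePoint_mk_of_mapClusterPt hcvx hlin hF hq hiso hp')
  have e₁ := hp.eq_of_tendsto (continuous_sqDistL2 _).continuousAt hr
  have e₂ := hp'.eq_of_tendsto (continuous_sqDistL2 _).continuousAt hr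
  have e₃ := hp.eq_of_tendsto (continuous_sqDistL2 _).continuousAt hr'
  have e₄ := hp'.eq_of_tendsto (continuous_sqDistL2 _).continuousAt hr'
  simp only [sqDistL2, sub_self, norm_zero] at e₁ e₂ e₃ e₄
  rw [norm_sub_rev p'.1] at e₂
  have : ‖p.1 - p'.1‖ ^ 2 = 0 := by linarith
  simpa [sub_eq_zero] using this

theorem tendsto_fst_of_mapClusterPt {p : En n × En m} (hp : MapClusterPt p atTop φ) :
    Tendsto (fun t => (φ t).1) atTop (𝓝 p.1) :=
  (continuous_fst.tendsto_nhdsSet_nhds fun _ hw => hw).comp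
    ((isCompact_closedBall q _).tendsto_nhdsSet_of_mapClusterPt
      ((eventually_ge_atTop 0).mono fun _ ht =>
        hφ.mapsTo_closedBall hcvx hlin (hF.differentiable one_ne_zero) hq ht)
      fun _ _ hp' => hφ.fst_eq_of_mapClusterPt hcvx hlin hF hq hiso hp' hp)

theorem gradX_eq_zero_of_mapClusterPt {p : En n × En m} (hp : MapClusterPt p atTop φ) :
    gradX F p = 0 := by
  set G := gradX F p
  have hg : Continuous fun w => inner ℝ G (gradX F w) := continuous_const.inner (continuous_gradX hF)
  have hf : Tendsto (fun t => inner ℝ G (φ t).1) atTop (𝓝 (inner ℝ G p.1)) :=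
    tendsto_const_nhds.inner (hφ.tendsto_fst_of_mapClusterPt hcvx hlin hF hq hiso hp)
  have hderiv (t : ℝ) (ht : 0 ≤ t) : ∃ d, HasDerivAt (fun s => inner ℝ G (φ s).1) d t ∧
      d ≤ -inner ℝ G (gradX F (φ t)) :=
    ⟨_, (innerSL ℝ G).hasFDerivAt.comp_hasDerivAt t (hφ.hasDerivAt_fst ht),
      (inner_neg_right G _).le⟩
  refine real_inner_self_nonpos.1 (le_of_forall_pos_le_add fun ε hε => ?_)
  rw [zero_add]
  exact hp.le_of_eventually_le hg
    ((eventually_lt_of_tendsto_of_hasDerivAt_le_neg hf hderiv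
      (hφ.uniformContinuousOn_comp hcvx hlin hF hq hg) hε).mono fun _ => le_of_lt)

theorem isSaddlePoint_of_mapClusterPt {p : En n × En m} (hp : MapClusterPt p atTop φ) :
    IsSaddlePoint F p := by
  have hFd := hF.differentiable one_ne_zero
  refine isSaddlePoint_of_gradX_eq_zero_of_gradZ_eq_zero hFd hcvx hlin
    (hφ.gradX_eq_zero_of_mapClusterPt hcvx hlin hF hq hiso hp) ?_
  rw [← (hφ.isSaddlePoint_mk_of_mapClusterPt hcvx hlin hF hq hiso hp).gradZ_eq_zero hFd]
  exact gradZ_mk_eq_gradZ_mk hlin p.1 p.2 q.2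

end IsTrajectory

theorem IsSaddlePoint.stablePt {F : En n × En m → ℝ} (hF : Differentiable ℝ F)
    (hcvx : ∀ z : En m, ConvexOn ℝ univ (fun x => F (x, z)))
    (hlin : ∀ x : En n, ∃ (L : En m →L[ℝ] ℝ) (c : ℝ), ∀ z : En m, F (x, z) = L z + c)
    {p : En n × En m} (hp : IsSaddlePoint F p) : StablePt F p := by
  refine fun ε hε => ⟨ε / 2, half_pos hε, fun φ hφ h0 t ht => ?_⟩
  have := hφ.dist_sq_le hcvx hlin hF hp ht
  nlinarith [dist_nonneg (x := φ t) (y := p), dist_nonneg (x := φ 0) (y := p)]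

/-- Corollary: global asymptotic stability via convexity-linearity.
If `F` is `C¹`, globally convex-concave, affine in `z`, and for every saddle point `(x*,z*)`
the equality `F(x,z*) = F(x*,z*)` forces `(x,z*)` to be a saddle point, then the (nonempty)
saddle set is globally asymptotically stable and every trajectory converges to a single
saddle point. -/
theorem stmt_3 {n m : ℕ} (F : En n × En m → ℝ) (hF : ContDiff ℝ 1 F)
    (hne : (SaddleSet F).Nonempty)
    (hcc : ∀ q : En n × En m,
      ConvexOn ℝ univ (fun x => F (x, q.2)) ∧ ConcaveOn ℝ univ (fun z => F (q.1, z)))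
    (hlin : ∀ x : En n, ∃ (L : En m →L[ℝ] ℝ) (c : ℝ), ∀ z : En m, F (x, z) = L z + c)
    (hiso : ∀ p ∈ SaddleSet F, ∀ x : En n, F (x, p.2) = F p → (x, p.2) ∈ SaddleSet F) :
    (∀ p ∈ SaddleSet F, StablePt F p) ∧
    (∀ φ : ℝ → En n × En m, IsTrajectory F φ →
      ∃ q ∈ SaddleSet F, Tendsto φ atTop (𝓝 q)) := by
  have hFd := hF.differentiable one_ne_zero
  have hcvx : ∀ z : En m, ConvexOn ℝ univ (fun x => F (x, z)) := fun z => (hcc (0, z)).1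
  obtain ⟨q, hq⟩ := hne
  refine ⟨fun p hp => IsSaddlePoint.stablePt hFd hcvx hlin hp, fun φ hφ => ?_⟩
  obtain ⟨p, hp⟩ := hφ.exists_mapClusterPt hcvx hlin hFd hq
  have hpsad := hφ.isSaddlePoint_of_mapClusterPt hcvx hlin hF hq hiso hp
  exact ⟨p, hpsad, hφ.tendsto_of_mapClusterPt_of_isSaddlePoint hcvx hlin hFd hp hpsad⟩
end
end

section
/- Let F : ℝⁿ × ℝᵐ → ℝ have the form F(x,z) = g(z)ᵀx, where g : ℝᵐ → ℝⁿ is C¹. Assume there exists a saddle point (x*,z*) of F such that: (i) F(x*,z*) ≥ F(x*,z) for all z ∈ ℝᵐ; (ii) for any z ∈ ℝᵐ, g(z)ᵀx* = 0 implies g(z) = 0; and (iii) every trajectory of the saddle-point dynamics ẋ = -∇ₓF(x,z), ż = ∇_zF(x,z) is bounded. Then every trajectory of the saddle-point dynamics converges asymptotically to the set of equilibrium points of the dynamics, i.e., dist((x(t),z(t)), {(x,z) : g(z) = 0 and Dg(z)ᵀx = 0}) → 0 as t → ∞. -/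
open Metric Filter Topology Set

noncomputable section

variable {n m : ℕ}

/-!
With `F(x,z) = ⟪g z, x⟫` the dynamics reads `ẋ = -g z`, `ż = Dg(z)* x`. Minimality of the saddle
point in `x` forces `g z* = 0`, so hypothesis (i) says `⟪g z, x*⟫ ≤ 0` for all `z`. Hence
`t ↦ ⟪x t, x*⟫` is nondecreasing and bounded, and by Barbalat's lemma its derivative
`-⟪g (z t), x*⟫` tends to `0`. Every ω-limit point `(x̄, z̄)` thus has `⟪g z̄, x*⟫ = 0`, so
`g z̄ = 0` by (ii), and by compactness `g (z t) → 0`. Barbalat's lemma applied to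
`⟪g (z t), x̄⟫`, whose derivative is `⟪Dg(z)* x, Dg(z)* x̄⟫`, then gives `‖Dg(z̄)* x̄‖² = 0`.
The uniform continuity that Barbalat's lemma needs comes from the boundedness of the trajectory.
-/

open scoped RealInnerProductSpace

theorem MapClusterPt.eq_of_tendsto_s11 {ι X : Type*} [TopologicalSpace X] [T2Space X] {l : Filter ι}
    {u : ι → X} {x y : X} (hx : MapClusterPt x l u) (hu : Tendsto u l (𝓝 y)) : x = y := by
  by_contra hne
  exact (hx.clusterPt.mono hu).neBot.ne (disjoint_nhds_nhds.2 hne).eq_bot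

theorem tendsto_comp_of_forall_mapClusterPt {ι X Y : Type*} [TopologicalSpace X]
    [TopologicalSpace Y] {l : Filter ι} {u : ι → X} {K : Set X} {H : X → Y} {y : Y}
    (hK : IsCompact K) (hu : ∀ᶠ i in l, u i ∈ K) (hH : Continuous H)
    (hclust : ∀ x, MapClusterPt x l u → H x = y) : Tendsto (H ∘ u) l (𝓝 y) := by
  refine tendsto_nhds.2 fun W hW hyW => ?_
  by_contra h
  obtain ⟨x, ⟨-, hxW⟩, hx⟩ := (hK.diff (hW.preimage hH)).exists_mapClusterPt_of_frequently
    (((not_eventually.1 h).and_eventually hu).mono fun i hi => ⟨hi.2, hi.1⟩)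
  exact hxW (by rw [mem_preimage, hclust x hx]; exact hyW)

/-- Barbalat's lemma. -/
theorem tendsto_deriv_atTop_zero_of_uniformContinuousOn {f f' : ℝ → ℝ} {L : ℝ}
    (hf : ∀ t, 0 ≤ t → HasDerivAt f (f' t) t) (hfL : Tendsto f atTop (𝓝 L))
    (hf' : UniformContinuousOn f' (Ici 0)) : Tendsto f' atTop (𝓝 0) := by
  refine Metric.tendsto_atTop.2 fun ε hε => ?_
  obtain ⟨δ, hδ, hδf'⟩ := Metric.uniformContinuousOn_iff.1 hf' (ε / 2) (half_pos hε)
  have hinc : Tendsto (fun t => f (t + δ / 2) - f t) atTop (𝓝 0) := by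
    simpa using (hfL.comp (tendsto_atTop_add_const_right _ (δ / 2) tendsto_id)).sub hfL
  obtain ⟨T, hT⟩ := Metric.tendsto_atTop.1 hinc (δ / 2 * (ε / 2)) (by positivity)
  refine ⟨max T 0, fun t ht => ?_⟩
  have ht0 : 0 ≤ t := le_of_max_le_right ht
  obtain ⟨ξ, hξ, hslope⟩ := exists_hasDerivAt_eq_slope f f'
    (lt_add_of_pos_right t (half_pos hδ))
    (fun s hs => (hf s (ht0.trans hs.1)).continuousAt.continuousWithinAt)
    (fun s hs => hf s (ht0.trans hs.1.le))
  have hnear : |f' t - f' ξ| < ε / 2 :=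
    hδf' t ht0 ξ (ht0.trans hξ.1.le)
      (by rw [Real.dist_eq, abs_lt]; constructor <;> linarith [hξ.1, hξ.2])
  have hslope_small : |f' ξ| < ε / 2 := by
    have := hT t (le_of_max_le_left ht)
    rw [Real.dist_eq, sub_zero] at this
    rw [hslope, add_sub_cancel_left, abs_div, abs_of_pos (half_pos hδ), div_lt_iff₀ (half_pos hδ)]
    linarith
  rw [Real.dist_eq, sub_zero]
  linarith [abs_sub_abs_le_abs_sub (f' t) (f' ξ)]

theorem exists_tendsto_of_hasDerivAt_nonneg {f f' : ℝ → ℝ}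
    (hf : ∀ t, 0 ≤ t → HasDerivAt f (f' t) t) (hf' : ∀ t, 0 ≤ t → 0 ≤ f' t)
    (hbdd : BddAbove (f '' Ici 0)) : ∃ L, Tendsto f atTop (𝓝 L) := by
  have hmono : MonotoneOn f (Ici 0) :=
    monotoneOn_of_hasDerivWithinAt_nonneg (convex_Ici 0)
      (fun t ht => (hf t ht).continuousAt.continuousWithinAt)
      (fun t ht => (hf t (interior_subset ht)).hasDerivWithinAt)
      (fun t ht => hf' t (interior_subset ht))
  have hmono' : Monotone fun t => f (max t 0) := fun s t hst =>
    hmono (le_max_right s 0) (le_max_right t 0) (max_le_max hst le_rfl)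
  have hbdd' : BddAbove (range fun t => f (max t 0)) :=
    hbdd.mono (range_subset_iff.2 fun t => mem_image_of_mem f (le_max_right t 0))
  refine ⟨_, (tendsto_atTop_ciSup hmono' hbdd').congr' ?_⟩
  filter_upwards [eventually_ge_atTop 0] with t ht
  rw [max_eq_left ht]

theorem uniformContinuousOn_comp_of_hasDerivAt {E Y : Type*} [NormedAddCommGroup E]
    [NormedSpace ℝ E] [UniformSpace Y] {φ : ℝ → E} {V : E → E} {H : E → Y} {K : Set E}
    (hφ : ∀ t, 0 ≤ t → HasDerivAt φ (V (φ t)) t) (hK : IsCompact K)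
    (hφK : ∀ t, 0 ≤ t → φ t ∈ K) (hV : ContinuousOn V K) (hH : ContinuousOn H K) :
    UniformContinuousOn (H ∘ φ) (Ici 0) := by
  obtain ⟨M, hM⟩ := hK.exists_bound_of_continuousOn hV
  have hlip : LipschitzOnWith M.toNNReal φ (Ici 0) :=
    (convex_Ici 0).lipschitzOnWith_of_nnnorm_hasDerivWithin_le
      (fun t ht => (hφ t ht).hasDerivWithinAt)
      (fun t ht => by
        rw [← NNReal.coe_le_coe, coe_nnnorm]
        exact (hM _ (hφK t ht)).trans (Real.le_coe_toNNReal M))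
  exact (hK.uniformContinuousOn_of_continuous hH).comp hlip.uniformContinuousOn
    (fun t ht => hφK t ht)

section LinearSaddleDynamics

variable {E G : Type*} [NormedAddCommGroup E] [InnerProductSpace ℝ E] [CompleteSpace E]
  [NormedAddCommGroup G] [InnerProductSpace ℝ G] [CompleteSpace G]
  {g : G → E} {φ : ℝ → E × G}

theorem hasGradientAt_inner_comp {D : G →L[ℝ] E} {z : G} (hg : HasFDerivAt g D z) (x : E) :
    HasGradientAt (fun z => ⟪g z, x⟫) (D.adjoint x) z := by
  have h := (innerSL ℝ x).hasFDerivAt.comp z hg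
  simp_rw [Function.comp_def, innerSL_apply_apply, real_inner_comm _ x] at h
  rw [hasGradientAt_iff_hasFDerivAt]
  refine h.congr_fderiv ?_
  ext w
  simp [ContinuousLinearMap.adjoint_inner_left]

def linearSaddleField (g : G → E) (p : E × G) : E × G :=
  (-g p.2, (fderiv ℝ g p.2).adjoint p.1)

theorem continuous_linearSaddleField (hg : ContDiff ℝ 1 g) : Continuous (linearSaddleField g) :=
  (hg.continuous.comp continuous_snd).neg.prodMk
    (((ContinuousLinearMap.adjoint.continuous.comp (hg.continuous_fderiv one_ne_zero)).comp
      continuous_snd).clm_apply continuous_fst)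

theorem hasDerivAt_inner_fst {t : ℝ} (hφ : HasDerivAt φ (linearSaddleField g (φ t)) t) (w : E) :
    HasDerivAt (fun s => ⟪(φ s).1, w⟫) (-⟪g (φ t).2, w⟫) t := by
  have hx : HasDerivAt (fun s => (φ s).1) (-g (φ t).2) t := hφ.fst
  simpa [inner_neg_left] using hx.inner ℝ (hasDerivAt_const t w)

theorem hasDerivAt_inner_apply_snd (hg : Differentiable ℝ g) {t : ℝ}
    (hφ : HasDerivAt φ (linearSaddleField g (φ t)) t) (w : E) :
    HasDerivAt (fun s => ⟪g (φ s).2, w⟫)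
      ⟪(fderiv ℝ g (φ t).2).adjoint (φ t).1, (fderiv ℝ g (φ t).2).adjoint w⟫ t := by
  have hz : HasDerivAt (fun s => (φ s).2) ((fderiv ℝ g (φ t).2).adjoint (φ t).1) t := hφ.snd
  have hgφ := (hg (φ t).2).hasFDerivAt.comp_hasDerivAt t hz
  simpa [ContinuousLinearMap.adjoint_inner_right] using
    hgφ.inner ℝ (hasDerivAt_const t w)

variable (hg : ContDiff ℝ 1 g) {K : Set (E × G)} (hK : IsCompact K)
  (hφ : ∀ t, 0 ≤ t → HasDerivAt φ (linearSaddleField g (φ t)) t) (hφK : ∀ t, 0 ≤ t → φ t ∈ K)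
include hg hK hφ hφK

theorem tendsto_inner_apply_snd_of_nonpos {w : E} (hw : ∀ z, ⟪g z, w⟫ ≤ 0) :
    Tendsto (fun t => ⟪g (φ t).2, w⟫) atTop (𝓝 0) := by
  have hα := fun t ht => hasDerivAt_inner_fst (hφ t ht) w
  have hαbdd : BddAbove ((fun t => ⟪(φ t).1, w⟫) '' Ici 0) :=
    (hK.bddAbove_image (continuous_fst.inner continuous_const).continuousOn).mono
      (by rintro _ ⟨t, ht, rfl⟩; exact mem_image_of_mem (fun p : E × G => ⟪p.1, w⟫) (hφK t ht))
  obtain ⟨L, hL⟩ := exists_tendsto_of_hasDerivAt_nonneg hα (fun t _ => neg_nonneg.2 (hw _)) hαbdd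
  have hH : Continuous fun p : E × G => -⟪g p.2, w⟫ :=
    ((hg.continuous.comp continuous_snd).inner continuous_const).neg
  have hα' : Tendsto (fun t => -⟪g (φ t).2, w⟫) atTop (𝓝 0) :=
    tendsto_deriv_atTop_zero_of_uniformContinuousOn hα hL
      (uniformContinuousOn_comp_of_hasDerivAt (H := fun p : E × G => -⟪g p.2, w⟫) hφ hK hφK
        (continuous_linearSaddleField hg).continuousOn hH.continuousOn)
  simpa using hα'.neg

theorem apply_snd_eq_zero_of_mapClusterPt {w : E} (hw : ∀ z, ⟪g z, w⟫ ≤ 0)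
    (hker : ∀ z, ⟪g z, w⟫ = 0 → g z = 0) {p : E × G} (hp : MapClusterPt p atTop φ) :
    g p.2 = 0 :=
  hker _ <| (hp.continuousAt_comp (f := fun q : E × G => ⟪g q.2, w⟫)
    ((hg.continuous.comp continuous_snd).inner continuous_const).continuousAt).eq_of_tendsto_s11
    (tendsto_inner_apply_snd_of_nonpos hg hK hφ hφK hw)

theorem tendsto_apply_snd_zero {w : E} (hw : ∀ z, ⟪g z, w⟫ ≤ 0)
    (hker : ∀ z, ⟪g z, w⟫ = 0 → g z = 0) : Tendsto (fun t => g (φ t).2) atTop (𝓝 0) :=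
  tendsto_comp_of_forall_mapClusterPt (H := fun q : E × G => g q.2) hK
    ((eventually_ge_atTop 0).mono hφK) (hg.continuous.comp continuous_snd)
    fun _ hp => apply_snd_eq_zero_of_mapClusterPt hg hK hφ hφK hw hker hp

theorem adjoint_fderiv_apply_eq_zero_of_mapClusterPt
    (hg0 : Tendsto (fun t => g (φ t).2) atTop (𝓝 0)) {p : E × G} (hp : MapClusterPt p atTop φ) :
    (fderiv ℝ g p.2).adjoint p.1 = 0 := by
  set H : E × G → ℝ := fun q => ⟪(fderiv ℝ g q.2).adjoint q.1, (fderiv ℝ g q.2).adjoint p.1⟫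
  have hA : Continuous fun z => (fderiv ℝ g z).adjoint :=
    ContinuousLinearMap.adjoint.continuous.comp (hg.continuous_fderiv one_ne_zero)
  have hH : Continuous H :=
    ((hA.comp continuous_snd).clm_apply continuous_fst).inner
      ((hA.comp continuous_snd).clm_apply continuous_const)
  have hβ : Tendsto (fun t => ⟪g (φ t).2, p.1⟫) atTop (𝓝 0) := by
    simpa using hg0.inner (tendsto_const_nhds (x := p.1))
  have hH0 : Tendsto (H ∘ φ) atTop (𝓝 0) :=
    tendsto_deriv_atTop_zero_of_uniformContinuousOn
      (fun t ht => hasDerivAt_inner_apply_snd (hg.differentiable one_ne_zero) (hφ t ht) p.1) hβ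
      (uniformContinuousOn_comp_of_hasDerivAt (H := H) hφ hK hφK
        (continuous_linearSaddleField hg).continuousOn hH.continuousOn)
  exact inner_self_eq_zero.1 ((hp.continuousAt_comp hH.continuousAt).eq_of_tendsto_s11 hH0)

theorem tendsto_infDist_linearSaddleEquilibria {w : E} (hw : ∀ z, ⟪g z, w⟫ ≤ 0)
    (hker : ∀ z, ⟪g z, w⟫ = 0 → g z = 0) :
    Tendsto (fun t => infDist (φ t) {q : E × G | g q.2 = 0 ∧ (fderiv ℝ g q.2).adjoint q.1 = 0})
      atTop (𝓝 0) :=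
  tendsto_comp_of_forall_mapClusterPt (H := (infDist · _)) hK ((eventually_ge_atTop 0).mono hφK)
    (continuous_infDist_pt _) fun _ hp => infDist_zero_of_mem
      ⟨apply_snd_eq_zero_of_mapClusterPt hg hK hφ hφK hw hker hp,
        adjoint_fderiv_apply_eq_zero_of_mapClusterPt hg hK hφ hφK
          (tendsto_apply_snd_zero hg hK hφ hφK hw hker) hp⟩

end LinearSaddleDynamics

theorem Xsp_eq_linearSaddleField {g : En m → En n} (hg : Differentiable ℝ g)
    {F : En n × En m → ℝ} (hFg : ∀ p : En n × En m, F p = ⟪g p.2, p.1⟫) :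
    Xsp F = linearSaddleField g := by
  funext p
  have hx : HasGradientAt (fun x => F (x, p.2)) (g p.2) p.1 := by
    simp_rw [hFg]
    exact hasGradientAt_iff_hasFDerivAt.2 (InnerProductSpace.toDual ℝ _ (g p.2)).hasFDerivAt
  have hz : HasGradientAt (fun z => F (p.1, z)) ((fderiv ℝ g p.2).adjoint p.1) p.2 := by
    simp_rw [hFg]
    exact hasGradientAt_inner_comp (hg p.2).hasFDerivAt p.1
  simp only [Xsp, gradX, gradZ, hx.gradient, hz.gradient, linearSaddleField]

theorem IsSaddlePoint.apply_snd_eq_zero {g : En m → En n} {F : En n × En m → ℝ}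
    (hFg : ∀ p : En n × En m, F p = ⟪g p.2, p.1⟫) {p : En n × En m} (hp : IsSaddlePoint F p) :
    g p.2 = 0 := by
  obtain ⟨U, W, hU, -, hxU, hzW, hsaddle⟩ := hp
  have hmin : IsLocalMin (fun x => ⟪g p.2, x⟫) p.1 := by
    filter_upwards [hU.mem_nhds hxU] with x hx
    simpa [hFg] using (hsaddle x hx p.2 hzW).2
  have h0 := hmin.hasFDerivAt_eq_zero (innerSL ℝ (g p.2)).hasFDerivAt
  simpa using congrArg (· (g p.2)) h0

/-- Proposition: global asymptotic convergence to the equilibria of the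
saddle-point dynamics for saddle functions linear in one argument. Let `F(x,z) = g(z)ᵀx` with
`g` of class `C¹`. If there exists a saddle point `(x*,z*)` with `F(x*,z*) ≥ F(x*,z)` for all
`z`, such that `g(z)ᵀx* = 0` implies `g(z) = 0`, and all trajectories of the saddle-point
dynamics are bounded, then every trajectory converges asymptotically to the set of equilibria
`{(x,z) : g(z) = 0 and Dg(z)ᵀx = 0}`. -/
theorem stmt_11 {n m : ℕ} (g : En m → En n) (hg : ContDiff ℝ 1 g)
    (F : En n × En m → ℝ) (hFg : ∀ p : En n × En m, F p = (inner ℝ (g p.2) p.1 : ℝ))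
    (pstar : En n × En m) (hsaddle : IsSaddlePoint F pstar)
    (hmax : ∀ z : En m, F (pstar.1, z) ≤ F pstar)
    (hker : ∀ z : En m, (inner ℝ (g z) pstar.1 : ℝ) = 0 → g z = 0)
    (hbdd : ∀ φ : ℝ → En n × En m, IsTrajectory F φ →
      ∃ C : ℝ, ∀ t : ℝ, 0 ≤ t → ‖φ t‖ ≤ C) :
    ∀ φ : ℝ → En n × En m, IsTrajectory F φ →
      Tendsto
        (fun t : ℝ => infDist (φ t)
          {q : En n × En m | g q.2 = 0 ∧
            ContinuousLinearMap.adjoint (fderiv ℝ g q.2) q.1 = 0})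
        atTop (𝓝 0) := by
  intro φ hφ
  obtain ⟨C, hC⟩ := hbdd φ hφ
  have hgz : g pstar.2 = 0 := hsaddle.apply_snd_eq_zero hFg
  have hw : ∀ z, ⟪g z, pstar.1⟫ ≤ 0 := fun z => by simpa [hFg, hgz] using hmax z
  rw [IsTrajectory, Xsp_eq_linearSaddleField (hg.differentiable one_ne_zero) hFg] at hφ
  exact tendsto_infDist_linearSaddleEquilibria hg (isCompact_closedBall 0 C) hφ
    (fun t ht => mem_closedBall_zero_iff.2 (hC t ht)) hw hker
end
end
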